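/- Let F be a group, let G be a finite abelian irreducible F-group, let m be a natural number, and let N be a positive integer. Then the number of N-tuples (y₁,…,y_N) ∈ (G^m)^N with [y₁,…,y_N]_F = G^m equals ∏_{k=0}^{m−1} (|G|^N − h_F(G)^k), as an identity of integers. -/

import Mathlib

section FGroupDefs

variable (F : Type*) [Group F]

/-- A subgroup of an `F`-group is a *normal `F`-subgroup* if it is normal and
stable under the `F`-action. -/
def IsNormalFSubgroup {G : Type*} [Group G] [MulDistribMulAction F G]
    (H : Subgroup G) : Prop :=
  H.Normal ∧ ∀ (f : F) (x : G), x ∈ H → f • x ∈ H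

/-- An *irreducible `F`-group* is a nontrivial `F`-group whose only normal
`F`-subgroups are the trivial subgroup and the whole group. -/
def IsIrreducibleFGroup (G : Type*) [Group G] [MulDistribMulAction F G] : Prop :=
  Nontrivial G ∧ ∀ H : Subgroup G, IsNormalFSubgroup F H → H = ⊥ ∨ H = ⊤

/-- `[s]_F`: the smallest normal `F`-subgroup containing the set `s`. -/
def normalFClosure {G : Type*} [Group G] [MulDistribMulAction F G] (s : Set G) :
    Subgroup G :=
  sInf {H : Subgroup G | IsNormalFSubgroup F H ∧ s ⊆ H}

/-- A group homomorphism is an `F`-group morphism if it commutes with the `F`-actions. -/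
def IsFHom {G G' : Type*} [Group G] [Group G'] [MulDistribMulAction F G]
    [MulDistribMulAction F G'] (φ : G →* G') : Prop :=
  ∀ (f : F) (x : G), φ (f • x) = f • φ x

/-- `h_F(G)`: the number of `F`-group endomorphisms of `G`. -/
noncomputable def hF (G : Type*) [Group G] [MulDistribMulAction F G] : ℕ :=
  Nat.card {φ : G →* G // IsFHom F φ}

/-- Two `F`-groups are isomorphic if there is a bijective group homomorphism
between them commuting with the `F`-actions. -/
def IsFIso (G G' : Type*) [Group G] [Group G'] [MulDistribMulAction F G]
    [MulDistribMulAction F G'] : Prop :=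
  ∃ e : G ≃* G', ∀ (f : F) (x : G), e (f • x) = f • e x

end FGroupDefs

/-!
Write `G^(m+1) = G^m × G` and induct on `m`. Since `G` is irreducible, a normal `F`-subgroup
of `B × G` that projects onto `B` is either everything or the graph of an `F`-morphism
`B → G`: its intersection with `1 × G` is `⊥` or `⊤`. Hence a tuple `(y, z)` generates
`B × G` iff `y` generates `B` and `z ≠ φ ∘ y` for every `φ ∈ Hom_F(B, G)`. For generating `y`
the map `φ ↦ φ ∘ y` is injective, so each such `y` extends in `|G|^N - |Hom_F(B, G)|` ways,
and `|Hom_F(G^m, G)| = h_F(G)^m`.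
-/
open Function

section

variable {F : Type*} [Group F]

section NormalFClosure

variable {G H : Type*} [Group G] [Group H] [MulDistribMulAction F G] [MulDistribMulAction F H]

theorem isNormalFSubgroup_normalFClosure (s : Set G) :
    IsNormalFSubgroup F (normalFClosure F s) :=
  ⟨⟨fun x hx g => Subgroup.mem_sInf.2 fun K hK =>
      hK.1.1.conj_mem x (Subgroup.mem_sInf.1 hx K hK) g⟩,
    fun f x hx => Subgroup.mem_sInf.2 fun K hK => hK.1.2 f x (Subgroup.mem_sInf.1 hx K hK)⟩

theorem subset_normalFClosure (s : Set G) : s ⊆ normalFClosure F s :=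
  fun _ hx => Subgroup.mem_sInf.2 fun _ hK => hK.2 hx

theorem normalFClosure_le {s : Set G} {K : Subgroup G} (hK : IsNormalFSubgroup F K)
    (hs : s ⊆ K) : normalFClosure F s ≤ K :=
  sInf_le ⟨hK, hs⟩

theorem IsNormalFSubgroup.comap {K : Subgroup H} (hK : IsNormalFSubgroup F K) {π : G →* H}
    (hπ : IsFHom F π) : IsNormalFSubgroup F (K.comap π) :=
  ⟨hK.1.comap π, fun f x (hx : π x ∈ K) => show π (f • x) ∈ K by rw [hπ]; exact hK.2 f _ hx⟩

theorem IsNormalFSubgroup.map {K : Subgroup G} (hK : IsNormalFSubgroup F K) {π : G →* H}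
    (hπ : IsFHom F π) (hsurj : Surjective π) : IsNormalFSubgroup F (K.map π) :=
  ⟨hK.1.map π hsurj, by rintro f _ ⟨x, hx, rfl⟩; exact ⟨f • x, hK.2 f x hx, hπ f x⟩⟩

theorem map_normalFClosure {π : G →* H} (hπ : IsFHom F π) (hsurj : Surjective π) (s : Set G) :
    (normalFClosure F s).map π = normalFClosure F (π '' s) :=
  le_antisymm
    (Subgroup.map_le_iff_le_comap.2 <|
      normalFClosure_le ((isNormalFSubgroup_normalFClosure _).comap hπ)
        fun x hx => subset_normalFClosure _ ⟨x, hx, rfl⟩)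
    (normalFClosure_le ((isNormalFSubgroup_normalFClosure s).map hπ hsurj)
      (Set.image_mono (subset_normalFClosure s)))

theorem normalFClosure_image_eq_top_iff (e : G ≃* H) (he : IsFHom F e.toMonoidHom) (s : Set G) :
    normalFClosure F (e '' s) = ⊤ ↔ normalFClosure F s = ⊤ := by
  change normalFClosure F (e.toMonoidHom '' s) = ⊤ ↔ _
  rw [← map_normalFClosure he e.surjective s, ← Subgroup.map_equiv_top e]
  exact (Subgroup.map_injective e.injective).eq_iff

end NormalFClosure

variable (F) in
abbrev FHom (A B : Type*) [Group A] [Group B] [MulDistribMulAction F A]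
    [MulDistribMulAction F B] : Type _ :=
  {φ : A →* B // IsFHom F φ}

variable (F) in
abbrev GeneratingTuple (G ι : Type*) [Group G] [MulDistribMulAction F G] : Type _ :=
  {y : ι → G // normalFClosure F (Set.range y) = ⊤}

theorem card_generatingTuple_congr {G H ι : Type*} [Group G] [Group H]
    [MulDistribMulAction F G] [MulDistribMulAction F H] (e : G ≃* H)
    (he : IsFHom F e.toMonoidHom) :
    Nat.card (GeneratingTuple F G ι) = Nat.card (GeneratingTuple F H ι) :=
  Nat.card_congr <| (Equiv.arrowCongr (.refl ι) e.toEquiv).subtypeEquiv fun y => by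
    change _ ↔ normalFClosure F (Set.range (e ∘ y)) = ⊤
    rw [Set.range_comp, normalFClosure_image_eq_top_iff e he]

theorem card_generatingTuple_of_subsingleton {G ι : Type*} [Group G] [MulDistribMulAction F G]
    [Subsingleton G] : Nat.card (GeneratingTuple F G ι) = 1 :=
  Nat.card_eq_one_iff_unique.2
    ⟨⟨fun _ _ => Subtype.ext (Subsingleton.elim _ _)⟩, ⟨⟨1, Subsingleton.elim _ _⟩⟩⟩

section Comm

variable {A B : Type*} [CommGroup A] [CommGroup B] [MulDistribMulAction F A]
  [MulDistribMulAction F B]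

theorem isNormalFSubgroup_of_smul_mem {K : Subgroup A} (hK : ∀ (f : F) x, x ∈ K → f • x ∈ K) :
    IsNormalFSubgroup F K :=
  ⟨K.normal_of_isMulCommutative, hK⟩

theorem isNormalFSubgroup_graph {φ : B →* A} (hφ : IsFHom F φ) : IsNormalFSubgroup F φ.graph :=
  isNormalFSubgroup_of_smul_mem fun f x (hx : φ x.1 = x.2) =>
    show φ (f • x.1) = f • x.2 by rw [hφ, hx]

theorem IsFHom.ext_of_normalFClosure_eq_top {s : Set B} (hs : normalFClosure F s = ⊤)
    {φ ψ : B →* A} (hφ : IsFHom F φ) (hψ : IsFHom F ψ) (h : Set.EqOn φ ψ s) : φ = ψ := by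
  have hle : normalFClosure F s ≤ φ.eqLocus ψ :=
    normalFClosure_le (isNormalFSubgroup_of_smul_mem fun f x (hx : φ x = ψ x) =>
      show φ (f • x) = ψ (f • x) by rw [hφ, hψ, hx]) h
  exact MonoidHom.ext fun x => hle (hs ▸ Subgroup.mem_top x)

theorem isFHom_iff_forall_comp_mulSingle {ι : Type*} [Finite ι] [DecidableEq ι]
    (Φ : (ι → A) →* B) :
    IsFHom F Φ ↔ ∀ i, IsFHom F (Φ.comp (MonoidHom.mulSingle _ i)) := by
  have hsingle : ∀ (f : F) (i : ι) (x : A),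
      f • (Pi.mulSingle i x : ι → A) = Pi.mulSingle i (f • x) :=
    fun f i x => funext <|
      Pi.apply_mulSingle (fun (_ : ι) (a : A) => f • a) (fun _ => smul_one f) i x
  refine ⟨fun hΦ i f x => show Φ (Pi.mulSingle i (f • x)) = f • Φ (Pi.mulSingle i x) by
    rw [← hsingle, hΦ], fun h f => ?_⟩
  have : Φ.comp (MulDistribMulAction.toMonoidHom _ f) =
      (MulDistribMulAction.toMonoidHom B f).comp Φ :=
    MonoidHom.pi_ext fun i x => by simpa [hsingle] using h i f x
  exact DFunLike.congr_fun this

theorem card_fHom_pi {ι : Type*} [Finite ι] :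
    Nat.card (FHom F (ι → A) B) = Nat.card (FHom F A B) ^ Nat.card ι := by
  classical
  have := Fintype.ofFinite ι
  let e : FHom F (ι → A) B ≃ (ι → FHom F A B) :=
    ((Pi.monoidHomMulEquiv (fun _ => A) B).toEquiv.subtypeEquiv
      isFHom_iff_forall_comp_mulSingle).trans Equiv.subtypePiEquivPi
  rw [Nat.card_congr e, Nat.card_fun]

theorem IsNormalFSubgroup.eq_top_or_eq_graph (hirr : IsIrreducibleFGroup F A)
    {H : Subgroup (B × A)} (hH : IsNormalFSubgroup F H) (hfst : H.map (MonoidHom.fst B A) = ⊤) :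
    H = ⊤ ∨ ∃ φ : B →* A, IsFHom F φ ∧ H = φ.graph := by
  rcases hirr.2 _ (hH.comap (π := MonoidHom.inr B A) fun f a => by simp) with hbot | htop
  · right
    have hinj : Injective ((MonoidHom.fst B A).comp H.subtype) := by
      refine (injective_iff_map_eq_one _).2 ?_
      rintro ⟨⟨b, a⟩, hx⟩ (rfl : b = 1)
      have ha : a ∈ H.comap (MonoidHom.inr B A) := hx
      rw [hbot, Subgroup.mem_bot] at ha
      subst ha
      rfl
    have hsurj : Surjective ((MonoidHom.fst B A).comp H.subtype) := fun b => by
      obtain ⟨x, hx, rfl⟩ := hfst.ge (Subgroup.mem_top b)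
      exact ⟨⟨x, hx⟩, rfl⟩
    obtain ⟨φ, rfl⟩ := Subgroup.exists_eq_graph ⟨hinj, hsurj⟩
    exact ⟨φ, fun f b => hH.2 f (b, φ b) rfl, rfl⟩
  · left
    refine eq_top_iff.2 fun ⟨b, a⟩ _ => ?_
    obtain ⟨⟨b, a'⟩, hx, rfl⟩ := hfst.ge (Subgroup.mem_top b)
    have h1 : (1, a * a'⁻¹) ∈ H := htop.ge (Subgroup.mem_top (a * a'⁻¹))
    simpa using mul_mem h1 hx

theorem normalFClosure_range_prod_eq_top_iff (hirr : IsIrreducibleFGroup F A) {ι : Type*}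
    (y : ι → B) (z : ι → A) :
    normalFClosure F (Set.range fun j => (y j, z j)) = ⊤ ↔
      normalFClosure F (Set.range y) = ⊤ ∧ z ∉ Set.range fun φ : FHom F B A => ⇑φ.1 ∘ y := by
  have hmap : (normalFClosure F (Set.range fun j => (y j, z j))).map (MonoidHom.fst B A) =
      normalFClosure F (Set.range y) := by
    rw [map_normalFClosure (fun _ _ => rfl) Prod.fst_surjective, ← Set.range_comp]
    rfl
  constructor
  · intro htop
    refine ⟨by rw [← hmap, htop, Subgroup.map_top_of_surjective _ Prod.fst_surjective], ?_⟩
    rintro ⟨⟨φ, hφ⟩, rfl⟩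
    have hle : ⊤ ≤ φ.graph := htop.ge.trans <| normalFClosure_le (isNormalFSubgroup_graph hφ)
      (Set.range_subset_iff.2 fun j => MonoidHom.mem_graph.2 rfl)
    have := hirr.1
    obtain ⟨a, ha⟩ := exists_ne (1 : A)
    exact ha ((hle (Subgroup.mem_top (1, a)) : φ 1 = a).symm.trans φ.map_one)
  · rintro ⟨hy, hz⟩
    refine ((isNormalFSubgroup_normalFClosure _).eq_top_or_eq_graph hirr
      (hmap.trans hy)).resolve_right ?_
    rintro ⟨φ, hφ, hgraph⟩
    refine hz ⟨⟨φ, hφ⟩, funext fun j => ?_⟩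
    exact (hgraph ▸ subset_normalFClosure _ ⟨j, rfl⟩ : (y j, z j) ∈ φ.graph)

theorem card_compl_range_fHom_comp [Finite A] {ι : Type*} [Finite ι] {y : ι → B}
    (hy : normalFClosure F (Set.range y) = ⊤) :
    (Nat.card ↥(Set.range fun φ : FHom F B A => ⇑φ.1 ∘ y)ᶜ : ℤ) =
      Nat.card A ^ Nat.card ι - Nat.card (FHom F B A) := by
  have hinj : Injective fun φ : FHom F B A => ⇑φ.1 ∘ y := fun φ ψ h =>
    Subtype.ext (IsFHom.ext_of_normalFClosure_eq_top hy φ.2 ψ.2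
      (Set.forall_mem_range.2 (congrFun h)))
  have hsplit := Set.ncard_add_ncard_compl (Set.range fun φ : FHom F B A => ⇑φ.1 ∘ y)
  rw [← Nat.card_coe_set_eq, Nat.card_range_of_injective hinj, ← Nat.card_coe_set_eq,
    Nat.card_fun] at hsplit
  rw [← Nat.cast_pow, ← hsplit, Nat.cast_add, add_sub_cancel_left]

theorem card_generatingTuple_prod [Finite A] [Finite B] (hirr : IsIrreducibleFGroup F A)
    {ι : Type*} [Finite ι] :
    (Nat.card (GeneratingTuple F (B × A) ι) : ℤ) =
      Nat.card (GeneratingTuple F B ι) * (Nat.card A ^ Nat.card ι - Nat.card (FHom F B A)) := by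
  let e : GeneratingTuple F (B × A) ι ≃
      Σ y : GeneratingTuple F B ι, ↥(Set.range fun φ : FHom F B A => ⇑φ.1 ∘ y.1)ᶜ :=
    { toFun t := ⟨⟨Prod.fst ∘ t.1, ((normalFClosure_range_prod_eq_top_iff hirr _ _).1 t.2).1⟩,
        ⟨Prod.snd ∘ t.1, ((normalFClosure_range_prod_eq_top_iff hirr _ _).1 t.2).2⟩⟩
      invFun w := ⟨fun j => (w.1.1 j, w.2.1 j),
        (normalFClosure_range_prod_eq_top_iff hirr _ _).2 ⟨w.1.2, w.2.2⟩⟩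
      left_inv _ := rfl
      right_inv _ := rfl }
  have := Fintype.ofFinite (GeneratingTuple F B ι)
  rw [Nat.card_congr e, Nat.card_sigma, Nat.cast_sum,
    Finset.sum_congr rfl fun y _ => card_compl_range_fHom_comp y.2, Finset.sum_const,
    Finset.card_univ, Fintype.card_eq_nat_card, nsmul_eq_mul]

end Comm

def piFinSuccMulEquiv (G : Type*) [Group G] (m : ℕ) : (Fin (m + 1) → G) ≃* (Fin m → G) × G :=
  MulEquiv.mk' ((Fin.snocEquiv fun _ => G).symm.trans (Equiv.prodComm _ _)) fun _ _ => rfl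

end

theorem count_tuples_abelian_general
    {F G : Type*} [Group F] [Group G] [MulDistribMulAction F G] [Finite G]
    (hab : ∀ a b : G, a * b = b * a)
    (hirr : IsIrreducibleFGroup F G)
    (m : ℕ) (N : ℕ) :
    (Nat.card {y : Fin N → (Fin m → G) //
        normalFClosure F (Set.range y) = ⊤} : ℤ) =
      ∏ k ∈ Finset.range m, ((Nat.card G : ℤ) ^ N - (hF F G : ℤ) ^ k) := by
  let : CommGroup G := { mul_comm := hab }
  induction m with
  | zero =>
    rw [Finset.prod_range_zero]
    exact_mod_cast card_generatingTuple_of_subsingleton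
  | succ m ih =>
    have he : IsFHom F (piFinSuccMulEquiv G m).toMonoidHom := fun _ _ => rfl
    rw [Finset.prod_range_succ, ← ih]
    change (Nat.card (GeneratingTuple F (Fin (m + 1) → G) (Fin N)) : ℤ) =
      Nat.card (GeneratingTuple F (Fin m → G) (Fin N)) * _
    rw [card_generatingTuple_congr _ he, card_generatingTuple_prod hirr, card_fHom_pi,
      Nat.card_fin, Nat.card_fin]
    rfl

/-- for a finite abelian irreducible `F`-group `G`, the number of
`N`-tuples in `G^m` generating `G^m` as a normal `F`-subgroup is
`∏_{k=0}^{m−1} (|G|^N − h_F(G)^k)`. -/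
theorem count_tuples_abelian
    {F G : Type*} [Group F] [Group G] [MulDistribMulAction F G] [Finite G]
    (hab : ∀ a b : G, a * b = b * a)
    (hirr : IsIrreducibleFGroup F G)
    (m : ℕ) (N : ℕ) (hN : 0 < N) :
    (Nat.card {y : Fin N → (Fin m → G) //
        normalFClosure F (Set.range y) = ⊤} : ℤ) =
      ∏ k ∈ Finset.range m, ((Nat.card G : ℤ) ^ N - (hF F G : ℤ) ^ k) :=
  count_tuples_abelian_general hab hirr m N
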